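/- Guard locks break deadlock patterns (two-request case): if q_1, q_2 are requests in distinct threads and there exist two distinct acquires a, a' on the same lock l in distinct threads with matching releases r, r' such that a ⊑_T q_1 ⊑_T r and a' ⊑_T q_2 ⊑_T r' (must-precede under all correctly reordered prefixes), then there is no correctly reordered prefix T' of T in which both q_1 and q_2 are final. (Proof idea: in any T' containing both, a and a' both precede q_1 and q_2; well-formedness forces one of r, r' between a and a', contradicting that requests precede the enclosing releases which must then be preceded by the other request.) -/

import Mathlib

inductive Op where
  | read : ℕ → Op
  | write : ℕ → Op
  | req : ℕ → Op
  | acq : ℕ → Op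
  | rel : ℕ → Op
deriving DecidableEq

structure Event where
  id : ℕ
  thd : ℕ
  op : Op
deriving DecidableEq

/-- Trace order: `e` occurs strictly before `f` in trace `T`. -/
def TrLt (T : List Event) (e f : Event) : Prop :=
  e ∈ T ∧ f ∈ T ∧ T.idxOf e < T.idxOf f

def IsAcq (e : Event) (l : ℕ) : Prop := e.op = Op.acq l
def IsRel (e : Event) (l : ℕ) : Prop := e.op = Op.rel l
def IsRead (e : Event) (x : ℕ) : Prop := e.op = Op.read x
def IsWrite (e : Event) (x : ℕ) : Prop := e.op = Op.write x
def IsReq (e : Event) (l : ℕ) : Prop := e.op = Op.req l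

/-- `r` is the matching release of acquire `a` in `T`. -/
def Matches (T : List Event) (a r : Event) : Prop :=
  ∃ l, IsAcq a l ∧ IsRel r l ∧ a.thd = r.thd ∧ TrLt T a r ∧
    ∀ r' ∈ T, IsRel r' l → ¬ (TrLt T a r' ∧ TrLt T r' r)

/-- Well-formedness of a trace. -/
structure WF (T : List Event) : Prop where
  nodup : T.Nodup
  wfAcq : ∀ a a' l, a ∈ T → a' ∈ T → IsAcq a l → IsAcq a' l → TrLt T a a' →
    ∃ r ∈ T, IsRel r l ∧ r.thd = a.thd ∧ TrLt T a r ∧ TrLt T r a'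
  wfRel : ∀ r l, r ∈ T → IsRel r l →
    ∃ a ∈ T, IsAcq a l ∧ a.thd = r.thd ∧ TrLt T a r ∧
      ∀ r' ∈ T, IsRel r' l → ¬ (TrLt T a r' ∧ TrLt T r' r)
  wfReqBefore : ∀ a l, a ∈ T → IsAcq a l →
    ∃ q ∈ T, IsReq q l ∧ q.thd = a.thd ∧ TrLt T q a ∧
      ∀ f ∈ T, f.thd = a.thd → ¬ (TrLt T q f ∧ TrLt T f a)
  wfReqAfter : ∀ q l e, q ∈ T → IsReq q l → e ∈ T → e.thd = q.thd → TrLt T q e →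
    (∀ f ∈ T, f.thd = q.thd → ¬ (TrLt T q f ∧ TrLt T f e)) → IsAcq e l

/-- Projection of a trace onto a thread. -/
def projT (T : List Event) (t : ℕ) : List Event := T.filter (fun e => e.thd = t)

/-- `w` is the last write observed by read `e` in `T`. -/
def LastWrite (T : List Event) (w e : Event) : Prop :=
  ∃ x, IsRead e x ∧ IsWrite w x ∧ TrLt T w e ∧
    ∀ w' ∈ T, IsWrite w' x → ¬ (TrLt T w w' ∧ TrLt T w' e)

/-- `T'` is a correctly reordered prefix of `T`. -/
def CRP (T T' : List Event) : Prop :=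
  WF T' ∧ (∀ e ∈ T', e ∈ T) ∧
  (∀ t, (projT T' t) <+: (projT T t)) ∧
  (∀ e w, e ∈ T' → LastWrite T w e → LastWrite T' w e)

/-- `e` must precede `f` under all correctly reordered prefixes. -/
def MustPrecede (T : List Event) (e f : Event) : Prop :=
  ∀ T', CRP T T' → f ∈ T' → e ∈ T' ∧ TrLt T' e f

/-- Thread order. -/
def ThreadLt (T : List Event) (e f : Event) : Prop :=
  e.thd = f.thd ∧ TrLt T e f

/-- Last-write order: smallest transitive relation containing thread order
and last-write dependencies. -/
inductive LWOrder (T : List Event) : Event → Event → Prop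
  | to : ∀ e f, ThreadLt T e f → LWOrder T e f
  | lw : ∀ w e, LastWrite T w e → LWOrder T w e
  | trans : ∀ e f g, LWOrder T e f → LWOrder T f g → LWOrder T e g

/-- `e` is inside the thread-order critical section of acquire `a` with
matching release `r`. -/
def InCSto (T : List Event) (a r e : Event) : Prop :=
  Matches T a r ∧ ThreadLt T a e ∧ ThreadLt T e r

/-- Release order. -/
inductive ROOrder (T : List Event) : Event → Event → Prop
  | lw : ∀ e f, LWOrder T e f → ROOrder T e f
  | rel : ∀ a r a' r' e f l, Matches T a r → Matches T a' r' → a ≠ a' →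
      IsAcq a l → IsAcq a' l → InCSto T a r e → InCSto T a' r' f →
      LWOrder T e f → ROOrder T r f
  | trans : ∀ e f g, ROOrder T e f → ROOrder T f g → ROOrder T e g

/-- CS-Match: no other release on `l` in thread of `a` can come between `a`
and `e` in any correctly reordered prefix. -/
def CSMatch (T : List Event) (a e : Event) (l : ℕ) : Prop :=
  ¬ ∃ r' T', r' ∈ T ∧ IsRel r' l ∧ r'.thd = a.thd ∧ CRP T T' ∧
    TrLt T' a r' ∧ TrLt T' r' e

/-- Trace-based critical section membership. -/
def InCSAll (T : List Event) (a r e : Event) : Prop :=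
  ∃ l, IsAcq a l ∧ IsRel r l ∧ a.thd = r.thd ∧ a ∈ T ∧ r ∈ T ∧
    MustPrecede T a e ∧ MustPrecede T e r ∧ CSMatch T a e l

/-- Partial-order-based critical section membership. -/
def InCSP (T : List Event) (P : Event → Event → Prop) (a r e : Event) : Prop :=
  ∃ l, IsAcq a l ∧ IsRel r l ∧ a.thd = r.thd ∧ a ∈ T ∧ r ∈ T ∧
    P a e ∧ P e r ∧ CSMatch T a e l

/-- Trace-based lock set. -/
def LHAll (T : List Event) (e : Event) : Set (ℕ × ℕ) :=
  { p | ∃ a r, IsAcq a p.1 ∧ a.thd = p.2 ∧ InCSAll T a r e }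

/-- Partial-order-based lock set. -/
def LHP (T : List Event) (P : Event → Event → Prop) (e : Event) : Set (ℕ × ℕ) :=
  { p | ∃ a r, IsAcq a p.1 ∧ a.thd = p.2 ∧ InCSP T P a r e }

/-- Guard intersection: common locks held by distinct threads. -/
def HatInter (M N : Set (ℕ × ℕ)) : Set ℕ :=
  { l | ∃ s t, (l, s) ∈ M ∧ (l, t) ∈ N ∧ s ≠ t }

/-- `e` is final in `T'`: no later event of the same thread. -/
def Final (T' : List Event) (e : Event) : Prop :=
  e ∈ T' ∧ ∀ f ∈ T', f.thd = e.thd → ¬ TrLt T' e f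

/-- `a` is the acquire fulfilling request `q` in `T`. -/
def Fulfills (T : List Event) (q a : Event) : Prop :=
  ∃ l, IsReq q l ∧ IsAcq a l ∧ a.thd = q.thd ∧ TrLt T q a ∧
    ∀ f ∈ T, f.thd = q.thd → ¬ (TrLt T q f ∧ TrLt T f a)

/-- `T'` is sync preserving w.r.t. `T`. -/
def SyncPreserving (T T' : List Event) : Prop :=
  ∀ a a' l, a ∈ T' → a' ∈ T' → IsAcq a l → IsAcq a' l → a ≠ a' →
    (TrLt T' a a' ↔ TrLt T a a')

/-- Sync-preserving closure of a set of events. -/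
inductive SPClosure (T : List Event) (S : Set Event) : Event → Prop
  | base : ∀ e, e ∈ S → SPClosure T S e
  | lwc : ∀ e f, LWOrder T e f → SPClosure T S f → SPClosure T S e
  | spc : ∀ a a' r l, IsAcq a l → IsAcq a' l → a ≠ a' → TrLt T a a' →
      Matches T a r → SPClosure T S a' → SPClosure T S r

section GuardHelpers
open scoped List
lemma trlt_of_sublist : ∀ {L' L : List Event}, L' <+ L → L.Nodup →
    ∀ {e f : Event}, TrLt L' e f → TrLt L e f := by
  intro L' L h
  induction h with
  | slnil => intro _ e f hef; exact absurd hef.1 List.not_mem_nil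
  | @cons l₁ l₂ a h ih =>
    intro hn e f hef
    obtain ⟨hna, hn₂⟩ := List.nodup_cons.mp hn
    obtain ⟨he, hf, hlt⟩ := ih hn₂ hef
    have hea : a ≠ e := fun h' => hna (h' ▸ he)
    have hfa : a ≠ f := fun h' => hna (h' ▸ hf)
    refine ⟨List.mem_cons_of_mem a he, List.mem_cons_of_mem a hf, ?_⟩
    rw [List.idxOf_cons_ne _ hea, List.idxOf_cons_ne _ hfa]
    omega
  | @cons_cons l₁ l₂ a h ih =>
    intro hn e f hef
    obtain ⟨hna, hn₂⟩ := List.nodup_cons.mp hn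
    obtain ⟨he, hf, hlt⟩ := hef
    by_cases hfa : f = a
    · subst hfa
      rw [List.idxOf_cons_self] at hlt
      omega
    · have hf₁ : f ∈ l₁ := (List.mem_cons.mp hf).resolve_left hfa
      by_cases hea : e = a
      · subst hea
        refine ⟨List.mem_cons_self, List.mem_cons_of_mem e (h.subset hf₁), ?_⟩
        rw [List.idxOf_cons_self, List.idxOf_cons_ne _ (fun h' => hfa h'.symm)]
        omega
      · have he₁ : e ∈ l₁ := (List.mem_cons.mp he).resolve_left hea
        rw [List.idxOf_cons_ne _ (fun h' => hea h'.symm),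
            List.idxOf_cons_ne _ (fun h' => hfa h'.symm)] at hlt
        obtain ⟨he₂, hf₂, hlt₂⟩ := ih hn₂ ⟨he₁, hf₁, by omega⟩
        refine ⟨List.mem_cons_of_mem a he₂, List.mem_cons_of_mem a hf₂, ?_⟩
        rw [List.idxOf_cons_ne _ (fun h' => hea h'.symm),
            List.idxOf_cons_ne _ (fun h' => hfa h'.symm)]
        omega

lemma trlt_total {L : List Event} {e f : Event} (he : e ∈ L) (hf : f ∈ L)
    (hne : e ≠ f) : TrLt L e f ∨ TrLt L f e := by
  rcases Nat.lt_trichotomy (L.idxOf e) (L.idxOf f) with h | h | h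
  · exact Or.inl ⟨he, hf, h⟩
  · exact absurd ((List.idxOf_inj he).mp h) hne
  · exact Or.inr ⟨hf, he, h⟩

lemma trlt_restrict {L' L : List Event} (h : L' <+ L) (hn : L.Nodup) {e f : Event}
    (he : e ∈ L') (hf : f ∈ L') (hlt : TrLt L e f) : TrLt L' e f := by
  have hne : e ≠ f := by rintro rfl; exact lt_irrefl _ hlt.2.2
  rcases trlt_total he hf hne with h' | h'
  · exact h'
  · have := (trlt_of_sublist h hn h').2.2
    have := hlt.2.2
    omega

lemma mem_of_prefix_lt {L' L : List Event} (h : L' <+: L) {e f : Event}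
    (hf : f ∈ L') (hlt : TrLt L e f) : e ∈ L' := by
  obtain ⟨s, rfl⟩ := h
  by_contra hne
  have h1 : List.idxOf f (L' ++ s) = List.idxOf f L' := List.idxOf_append_of_mem hf
  have h2 : List.idxOf e (L' ++ s) = L'.length + List.idxOf e s :=
    List.idxOf_append_of_notMem hne
  have h3 : List.idxOf f L' < L'.length := List.idxOf_lt_length_iff.mpr hf
  have h4 := hlt.2.2
  rw [show (L' ++ s).idxOf e = List.idxOf e (L' ++ s) from rfl,
    show (L' ++ s).idxOf f = List.idxOf f (L' ++ s) from rfl, h1, h2] at h4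
  omega

lemma filter_erase (p : Event → Bool) (l : List Event) (a : Event) :
    (l.erase a).filter p = (l.filter p).erase a := by
  induction l with
  | nil => simp
  | cons b l ih =>
    by_cases hb : b = a
    · subst hb
      rw [List.erase_cons_head]
      by_cases hp : p b
      · rw [List.filter_cons_of_pos hp, List.erase_cons_head]
      · rw [List.filter_cons_of_neg (by simpa using hp),
          List.erase_of_not_mem (fun hm => hp (List.of_mem_filter hm))]
    · rw [List.erase_cons_tail (by simpa using hb)]
      by_cases hp : p b
      · rw [List.filter_cons_of_pos hp, List.filter_cons_of_pos hp,
          List.erase_cons_tail (by simpa using hb), ih]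
      · rw [List.filter_cons_of_neg (by simpa using hp),
          List.filter_cons_of_neg (by simpa using hp), ih]

lemma erase_last_prefix {L : List Event} (hn : L.Nodup) {q : Event} (hq : q ∈ L)
    (hlast : ∀ f ∈ L, ¬ TrLt L q f) : L.erase q <+: L := by
  obtain ⟨s, t, rfl⟩ := List.append_of_mem hq
  rw [List.nodup_append] at hn
  obtain ⟨hs, hqt, hdisj⟩ := hn
  have hqs : q ∉ s := fun h => hdisj q h q List.mem_cons_self rfl
  have ht : t = [] := by
    cases t with
    | nil => rfl
    | cons f t' =>
      exfalso
      have hfq : q ≠ f := fun h => ((List.nodup_cons.mp hqt).1 (h ▸ List.mem_cons_self (a := f) (l := t')))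
      have hfs : f ∉ s := fun h => hdisj f h f (List.mem_cons_of_mem q List.mem_cons_self) rfl
      refine hlast f (by simp) ⟨by simp, by simp, ?_⟩
      rw [List.idxOf_append_of_notMem hqs, List.idxOf_append_of_notMem hfs,
        List.idxOf_cons_self, List.idxOf_cons_ne _ hfq, List.idxOf_cons_self]
      omega
  subst ht
  rw [List.erase_append_right _ hqs, List.erase_cons_head]
  simpa using List.prefix_append s [q]

lemma isRel_ne_req {e q : Event} {x y : ℕ} (he : IsRel e x) (hq : IsReq q y) : e ≠ q := by
  intro h; subst h; rw [IsRel] at he; rw [IsReq] at hq; rw [he] at hq; exact Op.noConfusion hq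

lemma isAcq_ne_req {e q : Event} {x y : ℕ} (he : IsAcq e x) (hq : IsReq q y) : e ≠ q := by
  intro h; subst h; rw [IsAcq] at he; rw [IsReq] at hq; rw [he] at hq; exact Op.noConfusion hq

lemma isWrite_ne_req {e q : Event} {x y : ℕ} (he : IsWrite e x) (hq : IsReq q y) : e ≠ q := by
  intro h; subst h; rw [IsWrite] at he; rw [IsReq] at hq; rw [he] at hq; exact Op.noConfusion hq

lemma crp_erase_final {T T' : List Event} (hcrp : CRP T T') {q : Event} {lq : ℕ}
    (hq : IsReq q lq) (hfin : Final T' q) : CRP T (T'.erase q) := by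
  obtain ⟨hwf', hsub, hproj, hlw⟩ := hcrp
  have hsl : T'.erase q <+ T' := List.erase_sublist
  have hn' : T'.Nodup := hwf'.nodup
  have hn₂ : (T'.erase q).Nodup := hsl.nodup hn'
  have hmem : ∀ {e : Event}, e ∈ T'.erase q ↔ e ≠ q ∧ e ∈ T' := fun {e} => hn'.mem_erase_iff
  have hup : ∀ {e f : Event}, TrLt (T'.erase q) e f → TrLt T' e f :=
    fun h => trlt_of_sublist hsl hn' h
  have hdown : ∀ {e f : Event}, e ∈ T'.erase q → f ∈ T'.erase q → TrLt T' e f →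
      TrLt (T'.erase q) e f := fun he hf h => trlt_restrict hsl hn' he hf h
  refine ⟨⟨hn₂, ?_, ?_, ?_, ?_⟩, ?_, ?_, ?_⟩
  · intro b b' m hb hb' hbm hb'm hlt
    obtain ⟨s, hsT', hsrel, hsthd, hx, hy⟩ :=
      hwf'.wfAcq b b' m (hmem.mp hb).2 (hmem.mp hb').2 hbm hb'm (hup hlt)
    have hs₂ : s ∈ T'.erase q := hmem.mpr ⟨isRel_ne_req hsrel hq, hsT'⟩
    exact ⟨s, hs₂, hsrel, hsthd, hdown hb hs₂ hx, hdown hs₂ hb' hy⟩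
  · intro s m hs hsrel
    obtain ⟨b, hbT', hbacq, hbthd, hba, hmin⟩ := hwf'.wfRel s m (hmem.mp hs).2 hsrel
    have hb₂ : b ∈ T'.erase q := hmem.mpr ⟨isAcq_ne_req hbacq hq, hbT'⟩
    refine ⟨b, hb₂, hbacq, hbthd, hdown hb₂ hs hba, ?_⟩
    rintro r₀ hr₀ hr₀rel ⟨hx, hy⟩
    exact hmin r₀ (hmem.mp hr₀).2 hr₀rel ⟨hup hx, hup hy⟩
  · intro b m hb hbm
    obtain ⟨q₀, hq₀T', hq₀req, hq₀thd, hq₀b, hmin⟩ := hwf'.wfReqBefore b m (hmem.mp hb).2 hbm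
    have hq₀ne : q₀ ≠ q := by
      intro h; subst h
      exact hfin.2 b (hmem.mp hb).2 hq₀thd.symm hq₀b
    have hq₀₂ : q₀ ∈ T'.erase q := hmem.mpr ⟨hq₀ne, hq₀T'⟩
    refine ⟨q₀, hq₀₂, hq₀req, hq₀thd, hdown hq₀₂ hb hq₀b, ?_⟩
    rintro f hf hfthd ⟨hx, hy⟩
    exact hmin f (hmem.mp hf).2 hfthd ⟨hup hx, hup hy⟩
  · intro q₀ m e hq₀ hq₀req he hethd hlt hmin
    refine hwf'.wfReqAfter q₀ m e (hmem.mp hq₀).2 hq₀req (hmem.mp he).2 hethd (hup hlt) ?_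
    rintro f hf hfthd ⟨hx, hy⟩
    by_cases hfq : f = q
    · subst hfq
      exact hfin.2 e (hmem.mp he).2 (hethd.trans hfthd.symm) hy
    · have hf₂ : f ∈ T'.erase q := hmem.mpr ⟨hfq, hf⟩
      exact hmin f hf₂ hfthd ⟨hdown hq₀ hf₂ hx, hdown hf₂ he hy⟩
  · intro e he; exact hsub e (hmem.mp he).2
  · intro t
    have heq : projT (T'.erase q) t = (projT T' t).erase q := filter_erase _ T' q
    rw [heq]
    by_cases hqt : q ∈ projT T' t
    · have hft : (projT T' t).Nodup := (List.filter_sublist (l := T')).nodup hn'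
      have hlast : ∀ f ∈ projT T' t, ¬ TrLt (projT T' t) q f := by
        intro f hf hlt
        have hf' := List.mem_filter.mp hf
        have hq' := List.mem_filter.mp hqt
        refine hfin.2 f hf'.1 ?_ (trlt_of_sublist (List.filter_sublist (l := T')) hn' hlt)
        have h1 : f.thd = t := by simpa using hf'.2
        have h2 : q.thd = t := by simpa using hq'.2
        rw [h1, h2]
      exact (erase_last_prefix hft hqt hlast).trans (hproj t)
    · rw [List.erase_of_not_mem hqt]; exact hproj t
  · intro e w he hlwT
    obtain ⟨x, hr, hw, hlt', hmin⟩ := hlw e w (hmem.mp he).2 hlwT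
    have hw₂ : w ∈ T'.erase q := hmem.mpr ⟨isWrite_ne_req hw hq, hlt'.1⟩
    refine ⟨x, hr, hw, hdown hw₂ he hlt', ?_⟩
    rintro w' hw' hw'w ⟨hx, hy⟩
    exact hmin w' (hmem.mp hw').2 hw'w ⟨hup hx, hup hy⟩

lemma guard_key {T : List Event} (hwf : WF T) {T' : List Event} (hcrp : CRP T T')
    {q b b' r : Event} {l : ℕ} (hq : ∃ lq, IsReq q lq)
    (hbl : IsAcq b l) (hb'l : IsAcq b' l) (hm : Matches T b r)
    (h2 : MustPrecede T q r) (hfin : Final T' q)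
    (hb : b ∈ T') (hb' : b' ∈ T') (hlt : TrLt T' b b') : False := by
  obtain ⟨lq, hqreq⟩ := hq
  have hn : T.Nodup := hwf.nodup
  have hn' : T'.Nodup := hcrp.1.nodup
  obtain ⟨r'', hr''T', hr''rel, hr''thd, hx'', hy''⟩ :=
    hcrp.1.wfAcq b b' l hb hb' hbl hb'l hlt
  obtain ⟨l₀, hbl₀, hrrel, hrthd, hbr, hminr⟩ := hm
  have hl₀ : l₀ = l := by
    rw [IsAcq] at hbl hbl₀
    exact Op.acq.inj (hbl₀.symm.trans hbl)
  subst hl₀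
  have hfsub' : projT T' b.thd <+ T' := List.filter_sublist (l := T')
  have hfsub : projT T b.thd <+ T := List.filter_sublist (l := T)
  have hmemf : ∀ {e : Event} {L : List Event}, e ∈ L → e.thd = b.thd → e ∈ projT L b.thd := by
    intro e L h1 h2
    exact List.mem_filter.mpr ⟨h1, by simpa using h2⟩
  have hbf' : b ∈ projT T' b.thd := hmemf hb rfl
  have hr''f' : r'' ∈ projT T' b.thd := hmemf hr''T' hr''thd
  have hstep1 : TrLt (projT T' b.thd) b r'' := trlt_restrict hfsub' hn' hbf' hr''f' hx''
  have hstep2 : TrLt (projT T b.thd) b r'' :=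
    trlt_of_sublist (hcrp.2.2.1 b.thd).sublist (hfsub.nodup hn) hstep1
  have hbr''T : TrLt T b r'' := trlt_of_sublist hfsub hn hstep2
  have hr''T : r'' ∈ T := hcrp.2.1 r'' hr''T'
  have hrT' : r ∈ T' := by
    by_cases hrr : r'' = r
    · exact hrr ▸ hr''T'
    · have hnlt : ¬ TrLt T r'' r := fun h => hminr r'' hr''T hr''rel ⟨hbr''T, h⟩
      have hrltT : TrLt T r r'' :=
        (trlt_total hbr.2.1 hr''T (fun h => hrr h.symm)).resolve_right hnlt
      have hrf : r ∈ projT T b.thd := hmemf hbr.2.1 hrthd.symm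
      have hlt2 : TrLt (projT T b.thd) r r'' :=
        trlt_restrict hfsub hn hrf (hmemf hr''T hr''thd) hrltT
      exact hfsub'.subset (mem_of_prefix_lt (hcrp.2.2.1 b.thd) hr''f' hlt2)
  have hcrp₂ : CRP T (T'.erase q) := crp_erase_final hcrp hqreq hfin
  have hr₂ : r ∈ T'.erase q := hn'.mem_erase_iff.mpr ⟨isRel_ne_req hrrel hqreq, hrT'⟩
  obtain ⟨hq₂, -⟩ := h2 _ hcrp₂ hr₂
  exact (hn'.mem_erase_iff.mp hq₂).1 rfl

end GuardHelpers

theorem guard_locks_break_deadlock (T : List Event) (hwf : WF T)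
    (q1 q2 a a' r r' : Event) (l : ℕ)
    (hreq1 : ∃ l1, IsReq q1 l1) (hreq2 : ∃ l2, IsReq q2 l2)
    (hthd : q1.thd ≠ q2.thd)
    (hane : a ≠ a') (hathd : a.thd ≠ a'.thd)
    (hal : IsAcq a l) (ha'l : IsAcq a' l)
    (hm : Matches T a r) (hm' : Matches T a' r')
    (h1 : MustPrecede T a q1) (h2 : MustPrecede T q1 r)
    (h3 : MustPrecede T a' q2) (h4 : MustPrecede T q2 r') :
    ¬ ∃ T', CRP T T' ∧ Final T' q1 ∧ Final T' q2 := by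
  rintro ⟨T', hcrp, hf1, hf2⟩
  obtain ⟨haT', halt⟩ := h1 T' hcrp hf1.1
  obtain ⟨ha'T', ha'lt⟩ := h3 T' hcrp hf2.1
  rcases trlt_total haT' ha'T' hane with hlt | hlt
  · exact guard_key hwf hcrp hreq1 hal ha'l hm h2 hf1 haT' ha'T' hlt
  · exact guard_key hwf hcrp hreq2 ha'l hal hm' h4 hf2 ha'T' haT' hlt
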